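/- Let L be a finite pure 2-dimensional simplicial complex on n vertices that is shellable. Then wsat(L^(1), K_3) = n − 1, where L^(1) is the 1-skeleton of L regarded as a simple graph. -/

import Mathlib

/-- A finite abstract simplicial complex on vertex type `V`: a finite family of
nonempty finite sets closed under taking nonempty subsets. -/
structure SComplex (V : Type*) where
  faces : Finset (Finset V)
  nonempty_mem : ∀ σ ∈ faces, σ.Nonempty
  down_closed : ∀ σ ∈ faces, ∀ τ, τ ⊆ σ → τ.Nonempty → τ ∈ faces

namespace SComplex

variable {V : Type*}

/-- A facet is an inclusion-maximal face. -/
def IsFacet (K : SComplex V) (σ : Finset V) : Prop :=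
  σ ∈ K.faces ∧ ∀ τ ∈ K.faces, σ ⊆ τ → σ = τ

/-- `K` is pure `d`-dimensional: `K` is nonempty and all facets have dimension `d`
(i.e. cardinality `d + 1`). -/
def PureDim (K : SComplex V) (d : ℕ) : Prop :=
  K.faces.Nonempty ∧ ∀ σ, K.IsFacet σ → σ.card = d + 1

/-- The 1-skeleton of a complex, regarded as a simple graph on `V`. -/
def skel1 [DecidableEq V] (K : SComplex V) : SimpleGraph V where
  Adj u v := u ≠ v ∧ ({u, v} : Finset V) ∈ K.faces
  symm := by
    refine ⟨fun u v h => ?_⟩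
    exact ⟨h.1.symm, by rw [Finset.pair_comm]; exact h.2⟩
  loopless := ⟨fun u h => h.1 rfl⟩

/-- `K` is shellable (as a pure `d`-dimensional complex): its facets can be ordered
`θ₁, …, θₘ` so that for every `i ≥ 2` the complex `K[θᵢ] ∩ K[θ₁, …, θ_{i-1}]` is pure
and `(d-1)`-dimensional, i.e. it is nonempty and all of its facets have cardinality `d`. -/
def Shellable (K : SComplex V) (d : ℕ) : Prop :=
  ∃ l : List (Finset V), l.Nodup ∧ (∀ σ, σ ∈ l ↔ K.IsFacet σ) ∧
    ∀ i : Fin l.length, 1 ≤ i.val →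
      ((∃ σ : Finset V, σ.Nonempty ∧ σ ⊆ l.get i ∧
          ∃ j : Fin l.length, j < i ∧ σ ⊆ l.get j) ∧
       ∀ σ : Finset V,
         (σ.Nonempty ∧ σ ⊆ l.get i ∧ ∃ j : Fin l.length, j < i ∧ σ ⊆ l.get j) →
         (∀ τ : Finset V,
            (τ.Nonempty ∧ τ ⊆ l.get i ∧ ∃ j : Fin l.length, j < i ∧ τ ⊆ l.get j) →
            σ ⊆ τ → σ = τ) →
         σ.card = d)

/-- `K'` arises from `K` by an elementary collapse: there is a face `τ` of `K` contained
in a single facet `σ` distinct from `τ`, and `K'` is obtained from `K` by removing all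
faces containing `τ`. -/
def ElemCollapse (K K' : SComplex V) : Prop :=
  ∃ τ σ : Finset V, τ ∈ K.faces ∧ K.IsFacet σ ∧ τ ≠ σ ∧ τ ⊆ σ ∧
    (∀ ρ, K.IsFacet ρ → τ ⊆ ρ → ρ = σ) ∧
    (∀ ρ, ρ ∈ K'.faces ↔ ρ ∈ K.faces ∧ ¬ τ ⊆ ρ)

/-- `K` collapses to `L` via a finite sequence of elementary collapses. -/
def CollapsesTo (K L : SComplex V) : Prop :=
  Relation.ReflTransGen ElemCollapse K L

/-- `K` is collapsible: it collapses to a complex consisting of a single vertex. -/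
def Collapsible (K : SComplex V) : Prop :=
  ∃ L : SComplex V, K.CollapsesTo L ∧ ∃ v : V, L.faces = {{v}}

/-- The reduced Euler characteristic `χ̃(K) = (Σᵢ (-1)^i fᵢ(K)) - 1`. -/
def redEuler (K : SComplex V) : ℤ :=
  (∑ σ ∈ K.faces, (-1 : ℤ) ^ (σ.card + 1)) - 1

/-- `K` is flag: every (nonempty) set of vertices of `K` that are pairwise joined by
edges of `K` is a face of `K`. -/
def Flag [DecidableEq V] (K : SComplex V) : Prop :=
  ∀ C : Finset V, C.Nonempty → (∀ a ∈ C, ({a} : Finset V) ∈ K.faces) →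
    (∀ a ∈ C, ∀ b ∈ C, a ≠ b → ({a, b} : Finset V) ∈ K.faces) → C ∈ K.faces

/-- The barycentric subdivision of `K`: vertices are the (nonempty) faces of `K`, and
faces are the nonempty collections of faces of `K` that form a chain under inclusion. -/
noncomputable def sd [DecidableEq V] (K : SComplex V) : SComplex (Finset V) := by
  classical
  exact
  { faces := K.faces.powerset.filter
      (fun C => C.Nonempty ∧ ∀ a ∈ C, ∀ b ∈ C, a ⊆ b ∨ b ⊆ a)
    nonempty_mem := fun C hC => (Finset.mem_filter.mp hC).2.1
    down_closed := by
      intro C hC D hDC hD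
      rw [Finset.mem_filter, Finset.mem_powerset] at hC ⊢
      exact ⟨hDC.trans hC.1, hD, fun a ha b hb => hC.2.2 a (hDC ha) b (hDC hb)⟩ }

end SComplex

/-- `es` is a witnessing sequence that `G` is weakly `K₃`-saturated in `F`:
`G` is a spanning subgraph of `F`, `es` is an ordering of the edges of `F` not in `G`,
and adding them one by one, each added edge completes a copy of `K₃` containing it. -/
def WitnessesWeakK3Sat {V : Type*} (F G : SimpleGraph V) (es : List (Sym2 V)) : Prop :=
  G ≤ F ∧ es.Nodup ∧ (∀ e, e ∈ es ↔ e ∈ F.edgeSet \ G.edgeSet) ∧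
    ∀ i : Fin es.length, ∃ x y z : V,
      es.get i = s(x, y) ∧
      (G ⊔ SimpleGraph.fromEdgeSet {e | e ∈ es.take (i.val + 1)}).Adj x y ∧
      (G ⊔ SimpleGraph.fromEdgeSet {e | e ∈ es.take (i.val + 1)}).Adj y z ∧
      (G ⊔ SimpleGraph.fromEdgeSet {e | e ∈ es.take (i.val + 1)}).Adj z x

/-- `G` is weakly `K₃`-saturated in `F`. -/
def WeaklyK3Saturated {V : Type*} (F G : SimpleGraph V) : Prop :=
  ∃ es : List (Sym2 V), WitnessesWeakK3Sat F G es

/-- The weak saturation number `wsat(F, K₃)`: the minimum number of edges of a graph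
weakly `K₃`-saturated in `F`. -/
noncomputable def wsatK3 (V : Type*) [Fintype V] (F : SimpleGraph V) : ℕ :=
  sInf {n | ∃ G : SimpleGraph V, WeaklyK3Saturated F G ∧ G.edgeSet.ncard = n}


/-!
Adding an edge that closes a triangle does not change which vertices are connected, so a graph
weakly `K₃`-saturated in the connected graph `L⁽¹⁾` is itself connected and has at least `n - 1`
edges. For the matching construction, follow a shelling `θ₁, …, θₘ`. Each triangle `θᵢ = abc`
with `i ≥ 2` meets the earlier ones in an edge `ab`. If `c` is an old vertex, the shelling
condition gives an earlier edge `bc`, and the missing side `ac` closes the triangle. If `c` is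
new, put `ac` into a tree `T`, and `bc` closes the triangle. Thus `T` gains exactly one edge per
new vertex, and it ends up a spanning tree of `L⁽¹⁾` that is weakly `K₃`-saturated in it.
-/

open SimpleGraph

namespace WitnessesWeakK3Sat

variable {V : Type*} {F G H : SimpleGraph V} {es : List (Sym2 V)}

lemma nil (G : SimpleGraph V) : WitnessesWeakK3Sat G G [] :=
  ⟨le_rfl, List.nodup_nil, by simp, fun i => i.elim0⟩

lemma sup_fromEdgeSet_eq (h : WitnessesWeakK3Sat F G es) :
    G ⊔ fromEdgeSet {e | e ∈ es} = F := by
  ext u v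
  simp only [sup_adj, fromEdgeSet_adj, Set.mem_ofPred_eq, h.2.2.1, Set.mem_sdiff, mem_edgeSet]
  exact ⟨fun h' => h'.elim (fun hG => h.1 hG) (·.1.1), fun hF => or_iff_not_imp_left.2
    fun hG => ⟨⟨hF, hG⟩, hF.ne⟩⟩

lemma snoc (h : WitnessesWeakK3Sat F G es) {x y z : V} (hxy : ¬F.Adj x y) (hne : x ≠ y)
    (hyz : F.Adj y z) (hzx : F.Adj z x) :
    WitnessesWeakK3Sat (F ⊔ edge x y) G (es ++ [s(x, y)]) := by
  have hsat := h.sup_fromEdgeSet_eq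
  obtain ⟨hGF, hnd, hmem, htri⟩ := h
  have hnew : s(x, y) ∉ F.edgeSet := hxy
  refine ⟨hGF.trans le_sup_left, ?_, fun e => ?_, fun i => ?_⟩
  · refine List.nodup_append.2 ⟨hnd, List.nodup_singleton _, ?_⟩
    rintro e he _ he' rfl
    rw [List.mem_singleton] at he'
    subst he'
    exact hnew ((hmem _).1 he).1
  · rw [List.mem_append, List.mem_singleton, hmem, edgeSet_sup, edgeSet_edge_of_ne hne]
    constructor
    · rintro (⟨hF, hG⟩ | rfl)
      · exact ⟨Or.inl hF, hG⟩
      · exact ⟨Or.inr rfl, fun hG => hnew (edgeSet_mono hGF hG)⟩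
    · rintro ⟨hF | hF, hG⟩
      · exact Or.inl ⟨hF, hG⟩
      · exact Or.inr hF
  by_cases hi : i.val < es.length
  · obtain ⟨a, b, c, hget, hab, hbc, hca⟩ := htri ⟨i, hi⟩
    have htake : (es ++ [s(x, y)]).take (i.val + 1) = es.take (i.val + 1) :=
      List.take_append_of_le_length hi
    refine ⟨a, b, c, ?_, ?_⟩
    · simpa [List.getElem_append_left hi] using hget
    · simpa only [htake] using ⟨hab, hbc, hca⟩
  · have hi' : i.val = es.length := by have := i.isLt; simp at this; omega
    have hgraph : G ⊔ fromEdgeSet {e | e ∈ (es ++ [s(x, y)]).take (i.val + 1)} =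
        F ⊔ edge x y := by
      rw [hi', List.take_of_length_le (by simp), ← hsat, sup_assoc, edge]
      congr 1
      ext u v
      simp [or_and_right]
    refine ⟨x, y, z, by simp [hi'], ?_⟩
    rw [hgraph]
    exact ⟨Or.inr ((edge_adj ..).2 ⟨Or.inl ⟨rfl, rfl⟩, hne⟩), Or.inl hyz, Or.inl hzx⟩

lemma sup (h : WitnessesWeakK3Sat F G es) (hH : H ⊓ F ≤ G) :
    WitnessesWeakK3Sat (F ⊔ H) (G ⊔ H) es := by
  obtain ⟨hGF, hnd, hmem, htri⟩ := h
  refine ⟨sup_le_sup_right hGF H, hnd, fun e => ?_, fun i => ?_⟩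
  · have hHF : H.edgeSet ∩ F.edgeSet ⊆ G.edgeSet := by
      rw [← edgeSet_inf]; exact edgeSet_mono hH
    rw [hmem, edgeSet_sup, edgeSet_sup]
    constructor
    · rintro ⟨hF, hG⟩
      exact ⟨Or.inl hF, by rintro (hG' | hH'); exacts [hG hG', hG (hHF ⟨hH', hF⟩)]⟩
    · rintro ⟨hF | hH', hG⟩
      · exact ⟨hF, fun hG' => hG (Or.inl hG')⟩
      · exact absurd (Or.inr hH') hG
  · obtain ⟨x, y, z, hget, hxy, hyz, hzx⟩ := htri i
    have hle : G ⊔ fromEdgeSet {e | e ∈ es.take (i.val + 1)} ≤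
        G ⊔ H ⊔ fromEdgeSet {e | e ∈ es.take (i.val + 1)} :=
      sup_le_sup_right le_sup_left _
    exact ⟨x, y, z, hget, hle hxy, hle hyz, hle hzx⟩

lemma adj_take_succ {k : ℕ} {u v : V}
    (h : (G ⊔ fromEdgeSet {e | e ∈ es.take (k + 1)}).Adj u v) :
    (G ⊔ fromEdgeSet {e | e ∈ es.take k}).Adj u v ∨ es[k]? = some s(u, v) := by
  simp only [sup_adj, fromEdgeSet_adj, Set.mem_ofPred_eq, List.take_add_one, List.mem_append,
    Option.mem_toList] at h ⊢
  tauto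

lemma reachable_of_adj_take (h : WitnessesWeakK3Sat F G es) (k : ℕ) {u v : V}
    (huv : (G ⊔ fromEdgeSet {e | e ∈ es.take k}).Adj u v) : G.Reachable u v := by
  induction k generalizing u v with
  | zero => simpa using huv.reachable
  | succ k ih =>
    rcases adj_take_succ huv with huv | huv
    · exact ih huv
    obtain ⟨hk, hget⟩ := List.getElem?_eq_some_iff.1 huv
    obtain ⟨x, y, z, hxy, -, hyz, hzx⟩ := h.2.2.2 ⟨k, hk⟩
    -- the other two sides of the triangle `xyz` were added before `s(x, y)`
    have hold : ∀ {a b}, (G ⊔ fromEdgeSet {e | e ∈ es.take (k + 1)}).Adj a b →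
        s(a, b) ≠ s(x, y) → G.Reachable a b := fun hab hne =>
      (adj_take_succ hab).elim ih fun h' => absurd (by simpa [← hxy, hk] using h'.symm) hne
    have hz : z ∉ s(x, y) := by simp [hzx.ne, hyz.ne.symm]
    have hyz' := hold hyz fun he => hz (he ▸ Sym2.mem_mk_right y z)
    have hzx' := hold hzx fun he => hz (he ▸ Sym2.mem_mk_left z x)
    have hsame : s(u, v) = s(x, y) := by rw [← hget, ← hxy]; rfl
    rcases Sym2.eq_iff.1 hsame with ⟨rfl, rfl⟩ | ⟨rfl, rfl⟩
    · exact (hyz'.trans hzx').symm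
    · exact hyz'.trans hzx'

lemma reachable (h : WitnessesWeakK3Sat F G es) {u v : V} (huv : F.Reachable u v) :
    G.Reachable u v := by
  have hadj : ∀ a b, F.Adj a b → G.Reachable a b := fun a b hab =>
    h.reachable_of_adj_take es.length (by rw [List.take_length, h.sup_fromEdgeSet_eq]; exact hab)
  rw [reachable_iff_reflTransGen] at huv ⊢
  exact huv.lift' id fun a b hab => (reachable_iff_reflTransGen a b).1 (hadj a b hab)

end WitnessesWeakK3Sat

namespace WeaklyK3Saturated

variable {V : Type*} {F G H : SimpleGraph V}

lemma refl (G : SimpleGraph V) : WeaklyK3Saturated G G := ⟨[], .nil G⟩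

lemma le (h : WeaklyK3Saturated F G) : G ≤ F := h.choose_spec.1

lemma sup_edge (h : WeaklyK3Saturated F G) {x y z : V} (hyz : F.Adj y z) (hzx : F.Adj z x) :
    WeaklyK3Saturated (F ⊔ edge x y) G := by
  by_cases hxy : x = y ∨ F.Adj x y
  · rwa [sup_eq_left.2 ((edge_le_iff F).2 hxy)]
  push Not at hxy
  obtain ⟨es, hes⟩ := h
  exact ⟨_, hes.snoc hxy.2 hxy.1 hyz hzx⟩

lemma sup (h : WeaklyK3Saturated F G) (hH : H ⊓ F ≤ G) : WeaklyK3Saturated (F ⊔ H) (G ⊔ H) :=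
  let ⟨_, hes⟩ := h; ⟨_, hes.sup hH⟩

lemma connected (h : WeaklyK3Saturated F G) (hF : F.Connected) : G.Connected :=
  let ⟨_, hes⟩ := h
  haveI := hF.nonempty
  ⟨fun u v => hes.reachable (hF u v)⟩

end WeaklyK3Saturated

theorem wsatK3_eq_of_isTree {V : Type*} [Fintype V] {F T : SimpleGraph V}
    (hsat : WeaklyK3Saturated F T) (hT : T.IsTree) : wsatK3 V F = Fintype.card V - 1 := by
  have hcard : T.edgeSet.ncard = Fintype.card V - 1 := by
    have := (isTree_iff_connected_and_card.1 hT).2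
    rw [Nat.card_coe_set_eq, Nat.card_eq_fintype_card] at this
    omega
  have hF : F.Connected := hT.connected.mono hsat.le
  refine le_antisymm (Nat.sInf_le ⟨T, hsat, hcard⟩) (le_csInf ⟨_, T, hsat, hcard⟩ ?_)
  rintro _ ⟨G, hG, rfl⟩
  have := (hG.connected hF).card_vert_le_card_edgeSet_add_one
  rw [Nat.card_coe_set_eq, Nat.card_eq_fintype_card] at this
  omega

structure IsSaturatingTree {V : Type*} (F T : SimpleGraph V) (W : Set V) : Prop where
  saturated : WeaklyK3Saturated F T
  acyclic : T.IsAcyclic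
  reachable : ∀ u ∈ W, ∀ v ∈ W, T.Reachable u v

namespace IsSaturatingTree

variable {V : Type*} {F T : SimpleGraph V} {W : Set V} {a b c : V}

lemma bot_singleton (a : V) : IsSaturatingTree ⊥ ⊥ {a} :=
  ⟨.refl ⊥, isAcyclic_bot, by rintro u rfl v rfl; rfl⟩

lemma sup_edge (h : IsSaturatingTree F T W) {x y z : V} (hyz : F.Adj y z) (hzx : F.Adj z x) :
    IsSaturatingTree (F ⊔ edge x y) T W :=
  ⟨h.saturated.sup_edge hyz hzx, h.acyclic, h.reachable⟩

lemma sup_edge_insert (h : IsSaturatingTree F T W) (ha : a ∈ W) (hac : a ≠ c)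
    (hc : ∀ w, ¬F.Adj c w) : IsSaturatingTree (F ⊔ edge a c) (T ⊔ edge a c) (insert c W) := by
  have hcT : ∀ w, ¬T.Adj c w := fun w hw => hc w (h.saturated.le hw)
  have hnreach : ¬T.Reachable a c := by
    rintro ⟨p⟩
    cases p.reverse with
    | nil => exact hac rfl
    | cons hcw _ => exact hcT _ hcw
  have hac' : (T ⊔ edge a c).Reachable c a :=
    (Adj.reachable (Or.inr ((edge_adj ..).2 ⟨Or.inr ⟨rfl, rfl⟩, hac.symm⟩)))
  have hW : ∀ u ∈ insert c W, (T ⊔ edge a c).Reachable u a := by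
    rintro u (rfl | hu)
    · exact hac'
    · exact (h.reachable u hu a ha).mono le_sup_left
  refine ⟨h.saturated.sup ?_, h.acyclic.sup_edge_of_not_reachable hnreach,
    fun u hu v hv => (hW u hu).trans (hW v hv).symm⟩
  rintro u v ⟨huv, hF⟩
  rcases ((edge_adj ..).1 huv).1 with ⟨rfl, rfl⟩ | ⟨rfl, rfl⟩
  · exact absurd hF.symm (hc u)
  · exact absurd hF (hc v)

lemma sup_triangle_of_adj (h : IsSaturatingTree F T W) (hab : F.Adj a b) (hbc : F.Adj b c) :
    IsSaturatingTree (F ⊔ (edge a b ⊔ edge b c ⊔ edge a c)) T W := by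
  rw [← sup_assoc, ← sup_assoc, sup_edge_of_adj F hab, sup_edge_of_adj F hbc]
  exact h.sup_edge hbc.symm hab.symm

lemma sup_triangle_insert (h : IsSaturatingTree F T W) (hab : F.Adj a b) (ha : a ∈ W)
    (hc : ∀ w, ¬F.Adj c w) :
    IsSaturatingTree (F ⊔ (edge a b ⊔ edge b c ⊔ edge a c)) (T ⊔ edge a c) (insert c W) := by
  have hac : a ≠ c := by rintro rfl; exact hc b hab
  rw [← sup_assoc, ← sup_assoc, sup_edge_of_adj F hab, sup_right_comm]
  have h' := h.sup_edge_insert ha hac hc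
  exact h'.sup_edge (x := b) (Or.inr ((edge_adj ..).2 ⟨Or.inr ⟨rfl, rfl⟩, hac.symm⟩))
    (Or.inl hab)

lemma exists_sup_triangle (h : IsSaturatingTree F T W) (hFW : ∀ u v, F.Adj u v → u ∈ W)
    (hab : F.Adj a b) (hbc : c ∈ W → F.Adj b c) :
    ∃ T', IsSaturatingTree (F ⊔ (edge a b ⊔ edge b c ⊔ edge a c)) T' (W ∪ {a, b, c}) := by
  have ha := hFW _ _ hab
  have hb := hFW _ _ hab.symm
  by_cases hc : c ∈ W
  · rw [Set.union_eq_left.2 (by simp [Set.insert_subset_iff, ha, hb, hc])]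
    exact ⟨T, h.sup_triangle_of_adj hab (hbc hc)⟩
  · have hW : W ∪ {a, b, c} = insert c W := by
      ext v; simp only [Set.mem_union, Set.mem_insert_iff, Set.mem_singleton_iff]
      constructor
      · rintro (hv | rfl | rfl | rfl) <;> simp_all
      · rintro (rfl | hv) <;> simp_all
    rw [hW]
    exact ⟨_, h.sup_triangle_insert hab ha fun w hw => hc (hFW _ _ hw)⟩

lemma exists_triangle (hab : a ≠ b) (hac : a ≠ c) (hbc : b ≠ c) :
    ∃ T, IsSaturatingTree (edge a b ⊔ edge b c ⊔ edge a c) T {a, b, c} := by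
  have hab' : (⊥ ⊔ edge a b).Adj a b := Or.inr ((edge_adj ..).2 ⟨Or.inl ⟨rfl, rfl⟩, hab⟩)
  have h := ((bot_singleton a).sup_edge_insert rfl hab fun _ => (bot_adj _ _).1).sup_triangle_insert
    hab' (Set.mem_insert_of_mem _ rfl) (c := c) (by simp [edge_adj, hac.symm, hbc.symm])
  rw [bot_sup_eq, sup_eq_right.2 (le_sup_left.trans le_sup_left)] at h
  refine ⟨edge a b ⊔ edge a c, ?_⟩
  convert h using 1
  ext v; simp only [Set.mem_insert_iff, Set.mem_singleton_iff]; tauto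

end IsSaturatingTree

section Prefix

variable {V : Type*}

def PrefixCovers (l : List (Finset V)) (k : ℕ) (σ : Finset V) : Prop :=
  ∃ j : Fin l.length, j.val < k ∧ σ ⊆ l.get j

variable {l : List (Finset V)} {k : ℕ}

lemma PrefixCovers.anti {σ τ : Finset V} (h : PrefixCovers l k τ) (hστ : σ ⊆ τ) :
    PrefixCovers l k σ :=
  let ⟨j, hj, hτ⟩ := h; ⟨j, hj, hστ.trans hτ⟩

lemma not_prefixCovers_zero (σ : Finset V) : ¬PrefixCovers l 0 σ := by
  simp [PrefixCovers]

lemma prefixCovers_succ (hk : k < l.length) (σ : Finset V) :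
    PrefixCovers l (k + 1) σ ↔ PrefixCovers l k σ ∨ σ ⊆ l[k] := by
  constructor
  · rintro ⟨j, hj, hσ⟩
    rcases (Nat.lt_succ_iff_lt_or_eq.1 hj) with hj | hj
    · exact Or.inl ⟨j, hj, hσ⟩
    · exact Or.inr (by simpa [hj] using hσ)
  · rintro (⟨j, hj, hσ⟩ | hσ)
    · exact ⟨j, by omega, hσ⟩
    · exact ⟨⟨k, hk⟩, k.lt_succ_self, hσ⟩

variable [DecidableEq V]

/-- `SComplex.skel1 K` is `pairGraph (· ∈ K.faces)`. -/
def pairGraph (P : Finset V → Prop) : SimpleGraph V where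
  Adj u v := u ≠ v ∧ P {u, v}
  symm := ⟨fun u v h => ⟨h.1.symm, by rw [Finset.pair_comm]; exact h.2⟩⟩
  loopless := ⟨fun _ h => h.1 rfl⟩

@[simp]
lemma pairGraph_adj {P : Finset V → Prop} {u v : V} :
    (pairGraph P).Adj u v ↔ u ≠ v ∧ P {u, v} := Iff.rfl

lemma pairGraph_or (P Q : Finset V → Prop) :
    pairGraph (fun σ => P σ ∨ Q σ) = pairGraph P ⊔ pairGraph Q := by
  ext u v
  simp [and_or_left]

lemma pairGraph_subset_triple (a b c : V) :
    pairGraph (· ⊆ {a, b, c}) = edge a b ⊔ edge b c ⊔ edge a c := by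
  ext u v
  simp only [pairGraph_adj, sup_adj, edge_adj, Finset.insert_subset_iff,
    Finset.singleton_subset_iff, Finset.mem_insert, Finset.mem_singleton]
  constructor
  · rintro ⟨huv, hu, hv⟩
    rcases hu with rfl | rfl | rfl <;> rcases hv with rfl | rfl | rfl <;> simp_all
  · rintro (((h | h) | h)) <;> rcases h with ⟨⟨rfl, rfl⟩ | ⟨rfl, rfl⟩, huv⟩ <;> simp [huv]

lemma pairGraph_prefixCovers_zero : pairGraph (PrefixCovers l 0) = ⊥ := by
  ext
  simp [not_prefixCovers_zero]

/-- A list of triangles in which every triangle after the first meets the union of its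
predecessors in an edge `{a, b}` and has its third vertex `c` either new or joined to `b` by an
earlier edge: this is what shellability says for a pure 2-dimensional complex. -/
def IsTriangleShelling (l : List (Finset V)) : Prop :=
  ∀ k (hk : k < l.length), ∃ a b c, a ≠ b ∧ a ≠ c ∧ b ≠ c ∧ l[k] = {a, b, c} ∧
    (0 < k → PrefixCovers l k {a, b} ∧ (PrefixCovers l k {c} → PrefixCovers l k {b, c}))

theorem IsTriangleShelling.exists_isSaturatingTree (hl : IsTriangleShelling l)
    (hk : k ≤ l.length) :
    ∃ T, IsSaturatingTree (pairGraph (PrefixCovers l k)) T {v | PrefixCovers l k {v}} := by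
  induction k with
  | zero =>
    simp only [pairGraph_prefixCovers_zero, not_prefixCovers_zero, Set.ofPred_false]
    exact ⟨⊥, .refl ⊥, isAcyclic_bot, by simp⟩
  | succ k ih =>
    obtain ⟨T, hT⟩ := ih (by omega)
    obtain ⟨a, b, c, hab, hac, hbc, htri, hstep⟩ := hl k (by omega)
    have hF : pairGraph (PrefixCovers l (k + 1)) =
        pairGraph (PrefixCovers l k) ⊔ (edge a b ⊔ edge b c ⊔ edge a c) := by
      rw [← pairGraph_subset_triple, ← htri, ← pairGraph_or]
      exact congrArg pairGraph (funext fun σ => propext (prefixCovers_succ (by omega) σ))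
    have hW : {v | PrefixCovers l (k + 1) {v}} = {v | PrefixCovers l k {v}} ∪ {a, b, c} := by
      ext v
      simp only [Set.mem_ofPred_eq, prefixCovers_succ (by omega : k < l.length), htri,
        Finset.singleton_subset_iff, Finset.mem_insert, Finset.mem_singleton, Set.mem_union,
        Set.mem_insert_iff, Set.mem_singleton_iff]
    rw [hF, hW]
    rcases Nat.eq_zero_or_pos k with rfl | hk0
    · simp only [pairGraph_prefixCovers_zero, bot_sup_eq, not_prefixCovers_zero,
        Set.ofPred_false, Set.empty_union]
      exact IsSaturatingTree.exists_triangle hab hac hbc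
    · obtain ⟨hab', hbc'⟩ := hstep hk0
      exact hT.exists_sup_triangle (fun u v huv => huv.2.anti (by simp)) ⟨hab, hab'⟩
        fun hc => ⟨hbc, hbc' hc⟩

end Prefix

/-- The shelling condition at a triangle `θ`, where `Q` stands for "lies in an earlier facet". -/
lemma exists_triple_of_pure_one_dim {V : Type*} [DecidableEq V] {θ : Finset V}
    (hθ : θ.card = 3) {Q : Finset V → Prop} (hne : ∃ σ, σ.Nonempty ∧ σ ⊆ θ ∧ Q σ)
    (hpure : ∀ σ, (σ.Nonempty ∧ σ ⊆ θ ∧ Q σ) →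
      (∀ τ, (τ.Nonempty ∧ τ ⊆ θ ∧ Q τ) → σ ⊆ τ → σ = τ) → σ.card = 2) :
    ∃ a b c, a ≠ b ∧ a ≠ c ∧ b ≠ c ∧ θ = {a, b, c} ∧ Q {a, b} ∧ (Q {c} → Q {b, c}) := by
  classical
  have hext : ∀ σ, σ.Nonempty → σ ⊆ θ → Q σ → ∃ τ, σ ⊆ τ ∧ τ ⊆ θ ∧ Q τ ∧ τ.card = 2 := by
    intro σ hσ hσθ hQσ
    obtain ⟨τ, hστ, hmax⟩ := (θ.powerset.filter fun τ => τ.Nonempty ∧ Q τ).exists_le_maximal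
      (Finset.mem_filter.2 ⟨Finset.mem_powerset.2 hσθ, hσ, hQσ⟩)
    obtain ⟨hτθ, hτ, hQτ⟩ : τ ⊆ θ ∧ τ.Nonempty ∧ Q τ := by simpa using hmax.1
    refine ⟨τ, hστ, hτθ, hQτ, hpure τ ⟨hτ, hτθ, hQτ⟩ fun τ' ⟨hne', hτ'θ, hQ'⟩ hττ' => ?_⟩
    exact hmax.eq_of_le (by simpa using ⟨hτ'θ, hne', hQ'⟩) hττ'
  obtain ⟨σ, hσ, hσθ, hQσ⟩ := hne
  obtain ⟨τ, -, hτθ, hQτ, hτ2⟩ := hext σ hσ hσθ hQσ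
  obtain ⟨a, b, hab, rfl⟩ := Finset.card_eq_two.1 hτ2
  obtain ⟨c, hc⟩ := Finset.card_eq_one.1
    (by rw [Finset.card_sdiff_of_subset hτθ, hθ, hτ2] : (θ \ {a, b}).card = 1)
  have hcab : c ∉ ({a, b} : Finset V) := (Finset.mem_sdiff.1 (hc ▸ Finset.mem_singleton_self c)).2
  have hθabc : θ = {a, b, c} := by
    rw [← Finset.sdiff_union_of_subset hτθ, hc]
    ext; simp only [Finset.mem_union, Finset.mem_insert, Finset.mem_singleton]; tauto
  simp only [Finset.mem_insert, Finset.mem_singleton, not_or] at hcab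
  obtain ⟨hca, hcb⟩ := hcab
  have hcpair : Q {c} → Q {a, c} ∨ Q {b, c} := by
    intro hQc
    obtain ⟨ρ, hcρ, hρθ, hQρ, hρ2⟩ := hext {c} (Finset.singleton_nonempty c)
      (by simp [hθabc]) hQc
    obtain ⟨x, y, hxy, rfl⟩ := Finset.card_eq_two.1 hρ2
    rw [hθabc] at hρθ
    simp only [Finset.singleton_subset_iff, Finset.mem_insert, Finset.mem_singleton,
      Finset.insert_subset_iff] at hcρ hρθ
    obtain ⟨hx, hy⟩ := hρθ
    rcases hcρ with rfl | rfl
    · rcases hy with rfl | rfl | rfl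
      · exact Or.inl (by rwa [Finset.pair_comm])
      · exact Or.inr (by rwa [Finset.pair_comm])
      · exact absurd rfl hxy
    · rcases hx with rfl | rfl | rfl
      · exact Or.inl hQρ
      · exact Or.inr hQρ
      · exact absurd rfl hxy
  by_cases hQbc : Q {b, c}
  · exact ⟨a, b, c, hab, Ne.symm hca, Ne.symm hcb, hθabc, hQτ, fun _ => hQbc⟩
  · refine ⟨b, a, c, hab.symm, Ne.symm hcb, Ne.symm hca, ?_, by rwa [Finset.pair_comm], fun hQc =>
      (hcpair hQc).resolve_right hQbc⟩
    rw [hθabc, Finset.insert_comm]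

namespace SComplex

variable {V : Type*} {K : SComplex V}

lemma exists_isFacet_superset {σ : Finset V} (hσ : σ ∈ K.faces) : ∃ θ, K.IsFacet θ ∧ σ ⊆ θ := by
  obtain ⟨θ, hσθ, hmax⟩ := K.faces.exists_le_maximal hσ
  exact ⟨θ, ⟨hmax.1, fun τ hτ hθτ => hmax.eq_of_le hτ hθτ⟩, hσθ⟩

lemma mem_faces_iff_prefixCovers {l : List (Finset V)} (hl : ∀ σ, σ ∈ l ↔ K.IsFacet σ)
    {σ : Finset V} (hσ : σ.Nonempty) : σ ∈ K.faces ↔ PrefixCovers l l.length σ := by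
  constructor
  · intro h
    obtain ⟨θ, hθ, hσθ⟩ := exists_isFacet_superset h
    obtain ⟨j, rfl⟩ := List.mem_iff_get.1 ((hl θ).2 hθ)
    exact ⟨j, j.isLt, hσθ⟩
  · rintro ⟨j, -, hσj⟩
    exact K.down_closed _ ((hl _).1 (l.get_mem j)).1 σ hσj hσ

variable [DecidableEq V]

lemma skel1_eq_pairGraph {l : List (Finset V)} (hl : ∀ σ, σ ∈ l ↔ K.IsFacet σ) :
    K.skel1 = pairGraph (PrefixCovers l l.length) := by
  ext u v
  exact and_congr_right fun _ => mem_faces_iff_prefixCovers hl (Finset.insert_nonempty _ _)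

lemma Shellable.exists_isTriangleShelling (hpure : K.PureDim 2) (h : K.Shellable 2) :
    ∃ l, (∀ σ, σ ∈ l ↔ K.IsFacet σ) ∧ IsTriangleShelling l := by
  obtain ⟨l, -, hfac, hsh⟩ := h
  refine ⟨l, hfac, fun k hk => ?_⟩
  have hcard : l[k].card = 3 := hpure.2 _ ((hfac _).1 (List.getElem_mem hk))
  rcases Nat.eq_zero_or_pos k with rfl | hk0
  · obtain ⟨a, b, c, hab, hac, hbc, h⟩ := Finset.card_eq_three.1 hcard
    exact ⟨a, b, c, hab, hac, hbc, h, fun h0 => absurd h0 (lt_irrefl 0)⟩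
  · obtain ⟨hne, hpure'⟩ := hsh ⟨k, hk⟩ hk0
    obtain ⟨a, b, c, hab, hac, hbc, h, hab', hc⟩ := exists_triple_of_pure_one_dim hcard hne hpure'
    exact ⟨a, b, c, hab, hac, hbc, h, fun _ => ⟨hab', hc⟩⟩

end SComplex

open SComplex in
/-- For a finite pure 2-dimensional shellable simplicial complex `L` on `n`
vertices, `wsat(L⁽¹⁾, K₃) = n - 1`. -/
theorem wsatK3_skel1_of_shellable {V : Type*} [Fintype V] [DecidableEq V]
    (L : SComplex V) (hvert : ∀ v : V, ({v} : Finset V) ∈ L.faces)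
    (hpure : L.PureDim 2) (hshell : L.Shellable 2) :
    wsatK3 V L.skel1 = Fintype.card V - 1 := by
  obtain ⟨l, hfac, hl⟩ := hshell.exists_isTriangleShelling hpure
  obtain ⟨T, hT⟩ := hl.exists_isSaturatingTree le_rfl
  rw [← skel1_eq_pairGraph hfac] at hT
  have hW (v : V) : PrefixCovers l l.length {v} :=
    (mem_faces_iff_prefixCovers hfac (Finset.singleton_nonempty v)).1 (hvert v)
  obtain ⟨σ, hσ⟩ := hpure.1
  have : Nonempty V := (L.nonempty_mem σ hσ).to_subtype.map Subtype.val
  have hTree : T.IsTree := ⟨⟨fun u v => hT.reachable u (hW u) v (hW v)⟩, hT.acyclic⟩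
  exact wsatK3_eq_of_isTree hT.saturated hTree
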